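/- Let m ≥ 3, ε ∈ 𝔽₂, and let a, b, c, d ∈ V^ε be such that a, c, d are pairwise distinct and b, c, d are pairwise distinct. Then the following are equivalent: (i) there exists A ∈ Sp_{2m}(2) such that θ_c(uA) = θ_c(u), θ_d(uA) = θ_d(u) and θ_a(uA) = θ_b(u) for all u ∈ V (i.e. some symplectic transformation fixes the quadratic forms θ_c and θ_d and maps θ_a to θ_b); (ii) θ₀(a+c+d) = θ₀(b+c+d). (This identifies the Sp_{2m}(2)-orbits on 3-element subsets of {θ_v : v ∈ V^ε}: two triples {θ_{v₁},θ_{v₂},θ_{v₃}} lie in the same orbit exactly when θ₀(v₁+v₂+v₃) takes the same value.) -/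
import Mathlib


open Matrix

/-- Row vectors in `𝔽₂^{2m}`, with coordinates indexed by `Fin m ⊕ Fin m`
(the first block and the second block of `m` coordinates). -/
abbrev Vm (m : ℕ) := (Fin m ⊕ Fin m) → ZMod 2

/-- The block matrix `e = (0 Iₘ; 0 0)`. -/
def eMat (m : ℕ) : Matrix (Fin m ⊕ Fin m) (Fin m ⊕ Fin m) (ZMod 2) :=
  Matrix.fromBlocks 0 1 0 0

/-- The block matrix `f = e + eᵀ = (0 Iₘ; Iₘ 0)`. -/
def fMat (m : ℕ) : Matrix (Fin m ⊕ Fin m) (Fin m ⊕ Fin m) (ZMod 2) :=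
  eMat m + (eMat m)ᵀ

/-- The alternating bilinear form `φ(u,v) = u f vᵀ`. -/
def phi (m : ℕ) (u v : Vm m) : ZMod 2 := u ⬝ᵥ (fMat m).mulVec v

/-- The quadratic form `θ₀(u) = u e uᵀ`. -/
def theta0 (m : ℕ) (u : Vm m) : ZMod 2 := u ⬝ᵥ (eMat m).mulVec u

/-- The quadratic form `θ_a(u) = θ₀(u) + φ(u,a)`. -/
def theta (m : ℕ) (a u : Vm m) : ZMod 2 := theta0 m u + phi m u a

/-- The transvection `t_c : u ↦ u + φ(u,c)·c`. -/
def tvec (m : ℕ) (c u : Vm m) : Vm m := u + phi m u c • c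

namespace Stmt2Aux

variable {m : ℕ}

lemma z2_add_self (x : ZMod 2) : x + x = 0 := by revert x; decide
lemma z2_mul_self (x : ZMod 2) : x * x = x := by revert x; decide
lemma z2_cases (x : ZMod 2) : x = 0 ∨ x = 1 := by revert x; decide

def chi (x : ZMod 2) : ℤ := if x = 0 then 1 else -1

lemma chi_add (x y : ZMod 2) : chi (x + y) = chi x * chi y := by revert x y; decide
lemma chi_zero : chi 0 = 1 := rfl
lemma chi_inj {x y : ZMod 2} (h : chi x = chi y) : x = y := by revert x y; decide
lemma chi_bounds (x : ZMod 2) : -1 ≤ chi x ∧ chi x ≤ 1 := by revert x; decide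

lemma fMat_transpose : (fMat m)ᵀ = fMat m := by
  simp [fMat, transpose_add, add_comm]

lemma phi_add_left (u v w : Vm m) : phi m (u + v) w = phi m u w + phi m v w := by
  simp [phi, add_dotProduct]

lemma phi_add_right (u v w : Vm m) : phi m u (v + w) = phi m u v + phi m u w := by
  simp [phi, mulVec_add, dotProduct_add]

lemma phi_smul_right (α : ZMod 2) (u v : Vm m) : phi m u (α • v) = α * phi m u v := by
  simp [phi, mulVec_smul, dotProduct_smul, smul_eq_mul]

lemma phi_comm (u v : Vm m) : phi m u v = phi m v u := by
  rw [phi, phi, dotProduct_mulVec, ← fMat_transpose, vecMul_transpose, dotProduct_comm,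
    fMat_transpose]

lemma v2_add_self (u : Vm m) : u + u = 0 := funext fun j => z2_add_self (u j)

lemma theta0_add (u v : Vm m) : theta0 m (u + v) = theta0 m u + theta0 m v + phi m u v := by
  have h : v ⬝ᵥ (eMat m).mulVec u = u ⬝ᵥ (eMat m)ᵀ.mulVec v := by
    rw [dotProduct_mulVec, mulVec_transpose, dotProduct_comm]
  simp only [theta0, phi, fMat, mulVec_add, add_mulVec, dotProduct_add, add_dotProduct, h]
  ring

lemma phi_self (u : Vm m) : phi m u u = 0 := by
  have h := theta0_add u u
  rw [v2_add_self] at h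
  simp only [theta0, Matrix.mulVec_zero, dotProduct_zero, z2_add_self, zero_add] at h
  exact h.symm

lemma theta0_smul (α : ZMod 2) (v : Vm m) : theta0 m (α • v) = α * theta0 m v := by
  rw [theta0, mulVec_smul, dotProduct_smul, smul_dotProduct, smul_eq_mul, smul_eq_mul,
    ← mul_assoc, z2_mul_self, theta0]

lemma phi_smul_left (α : ZMod 2) (u w : Vm m) : phi m (α • u) w = α * phi m u w := by
  rw [phi_comm, phi_smul_right, phi_comm]

lemma theta_shift (a w u : Vm m) : theta m (a + w) u = theta m a u + phi m u w := by
  rw [theta, theta, phi_add_right]; ring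

lemma theta_tvec (a v u : Vm m) :
    theta m a (tvec m v u) = theta m a u + phi m u v * (theta m a v + 1) := by
  rw [tvec, theta, theta0_add, theta0_smul, phi_add_left, phi_smul_right, phi_smul_left,
    theta, theta]
  rw [z2_mul_self]
  ring

lemma phi_tvec (v u u' : Vm m) : phi m (tvec m v u) (tvec m v u') = phi m u u' := by
  rw [tvec, tvec, phi_add_left, phi_add_right, phi_add_right, phi_smul_right, phi_smul_left,
    phi_smul_left, phi_smul_right, phi_self, phi_comm v u']
  ring_nf
  rw [show (2:ZMod 2) = 0 by decide, mul_zero, add_zero]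

/-- The matrix of the transvection `t_v`. -/
def tMat (m : ℕ) (v : Vm m) : Matrix (Fin m ⊕ Fin m) (Fin m ⊕ Fin m) (ZMod 2) :=
  1 + vecMulVec ((fMat m).mulVec v) v

lemma vecMul_tMat (v u : Vm m) : Matrix.vecMul u (tMat m v) = tvec m v u := by
  have h : Matrix.vecMul u (vecMulVec ((fMat m).mulVec v) v) = phi m u v • v := by
    funext j
    simp only [Matrix.vecMul, dotProduct, vecMulVec_apply, phi, Pi.smul_apply, smul_eq_mul,
      Finset.sum_mul]
    exact Finset.sum_congr rfl fun k _ => by ring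
  rw [tMat, Matrix.vecMul_add, Matrix.vecMul_one, h, tvec]

lemma fMat_eq : fMat m = Matrix.fromBlocks 0 1 1 0 := by
  rw [fMat, eMat, Matrix.fromBlocks_transpose, Matrix.fromBlocks_add]
  simp

lemma fMat_mul_fMat : fMat m * fMat m = 1 := by
  rw [fMat_eq, Matrix.fromBlocks_multiply]
  simp [← Matrix.fromBlocks_one]

lemma matrix_eq_of_dot {M N : Matrix (Fin m ⊕ Fin m) (Fin m ⊕ Fin m) (ZMod 2)}
    (h : ∀ u w : Vm m, u ⬝ᵥ M.mulVec w = u ⬝ᵥ N.mulVec w) : M = N := by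
  ext i j
  have h2 := h (Pi.single i 1) (Pi.single j 1)
  simpa [single_dotProduct, Matrix.mulVec_single] using h2

lemma dot_AfAt (A : Matrix (Fin m ⊕ Fin m) (Fin m ⊕ Fin m) (ZMod 2)) (u w : Vm m) :
    u ⬝ᵥ (A * fMat m * Aᵀ).mulVec w = phi m (Matrix.vecMul u A) (Matrix.vecMul w A) := by
  rw [Matrix.mul_assoc, ← Matrix.mulVec_mulVec, ← Matrix.mulVec_mulVec, Matrix.dotProduct_mulVec,
    Matrix.mulVec_transpose, phi]

lemma tMat_symplectic (v : Vm m) : tMat m v * fMat m * (tMat m v)ᵀ = fMat m := by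
  apply matrix_eq_of_dot
  intro u w
  rw [dot_AfAt, vecMul_tMat, vecMul_tMat, phi_tvec]
  rfl

lemma symp_mul {A B : Matrix (Fin m ⊕ Fin m) (Fin m ⊕ Fin m) (ZMod 2)}
    (hA : A * fMat m * Aᵀ = fMat m) (hB : B * fMat m * Bᵀ = fMat m) :
    (A * B) * fMat m * (A * B)ᵀ = fMat m := by
  rw [Matrix.transpose_mul]
  calc (A * B) * fMat m * (Bᵀ * Aᵀ) = A * (B * fMat m * Bᵀ) * Aᵀ := by
        simp only [Matrix.mul_assoc]
    _ = fMat m := by rw [hB, hA]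

lemma chi_sum {ι : Type*} (s : Finset ι) (f : ι → ZMod 2) :
    chi (∑ i ∈ s, f i) = ∏ i ∈ s, chi (f i) := by
  induction s using Finset.cons_induction with
  | empty => simp [chi_zero]
  | cons a s ha ih => rw [Finset.sum_cons, Finset.prod_cons, chi_add, ih]

lemma eMat_mulVec (u : Vm m) :
    (eMat m).mulVec u = Sum.elim (fun i => u (Sum.inr i)) 0 := by
  funext j
  cases j with
  | inl i =>
      simp [eMat, Matrix.mulVec, dotProduct, Fintype.sum_sum_type, Matrix.one_apply,
        ite_mul, Finset.sum_ite_eq]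
  | inr i =>
      simp [eMat, Matrix.mulVec, dotProduct, Fintype.sum_sum_type]

lemma theta0_apply (u : Vm m) :
    theta0 m u = ∑ i : Fin m, u (Sum.inl i) * u (Sum.inr i) := by
  rw [theta0, eMat_mulVec]
  simp [dotProduct, Fintype.sum_sum_type]

def pairEquiv (m : ℕ) : (Fin m → ZMod 2 × ZMod 2) ≃ Vm m where
  toFun g := Sum.elim (fun i => (g i).1) (fun i => (g i).2)
  invFun u i := (u (Sum.inl i), u (Sum.inr i))
  left_inv g := by funext i; simp
  right_inv u := by funext j; cases j <;> rfl

lemma sum_chi_theta0 : ∑ y : Vm m, chi (theta0 m y) = 2 ^ m := by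
  rw [← Equiv.sum_comp (pairEquiv m) (fun y => chi (theta0 m y))]
  have h1 : ∀ g : Fin m → ZMod 2 × ZMod 2,
      chi (theta0 m (pairEquiv m g)) = ∏ i : Fin m, chi ((g i).1 * (g i).2) := by
    intro g
    rw [theta0_apply, chi_sum]
    rfl
  rw [Finset.sum_congr rfl fun g _ => h1 g,
    ← Fintype.prod_sum (fun (_ : Fin m) (x : ZMod 2 × ZMod 2) => chi (x.1 * x.2))]
  have h2 : ∑ x : ZMod 2 × ZMod 2, chi (x.1 * x.2) = 2 := by decide
  simp [h2]

lemma exists_phi_one {v : Vm m} (hv : v ≠ 0) : ∃ δ : Vm m, phi m δ v = 1 := by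
  have hfv : (fMat m).mulVec v ≠ 0 := by
    intro h0
    apply hv
    have h1 : (fMat m * fMat m).mulVec v = (fMat m).mulVec ((fMat m).mulVec v) :=
      (Matrix.mulVec_mulVec _ _ _).symm
    rw [fMat_mul_fMat, Matrix.one_mulVec, h0, Matrix.mulVec_zero] at h1
    exact h1
  obtain ⟨j, hj⟩ : ∃ j, (fMat m).mulVec v j ≠ 0 := by
    by_contra h
    push_neg at h
    exact hfv (funext h)
  refine ⟨Pi.single j 1, ?_⟩
  rw [phi, single_dotProduct, one_mul]
  rcases z2_cases ((fMat m).mulVec v j) with h | h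
  · exact absurd h hj
  · exact h

lemma sum_chi_linear {v : Vm m} (hv : v ≠ 0) : ∑ y : Vm m, chi (phi m y v) = 0 := by
  obtain ⟨δ, hδ⟩ := exists_phi_one hv
  have h : ∑ y : Vm m, chi (phi m (y + δ) v) = ∑ y : Vm m, chi (phi m y v) :=
    Equiv.sum_comp (Equiv.addRight δ) (fun y => chi (phi m y v))
  have h2 : ∀ y : Vm m, chi (phi m (y + δ) v) = - chi (phi m y v) := by
    intro y
    rw [phi_add_left, hδ, chi_add]
    simp [chi]
  rw [Finset.sum_congr rfl fun y _ => h2 y, Finset.sum_neg_distrib] at h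
  linarith

lemma sum_chi_theta (v : Vm m) :
    ∑ y : Vm m, chi (theta m v y) = chi (theta0 m v) * 2 ^ m := by
  have key : ∀ y : Vm m, theta m v y = theta0 m (y + v) + theta0 m v := by
    intro y
    rw [theta, theta0_add]
    have h := z2_add_self (theta0 m v)
    linear_combination -h
  calc ∑ y : Vm m, chi (theta m v y)
      = ∑ y : Vm m, chi (theta0 m v) * chi (theta0 m (y + v)) := by
        refine Finset.sum_congr rfl fun y _ => ?_
        rw [key y, chi_add, mul_comm]
    _ = chi (theta0 m v) * ∑ y : Vm m, chi (theta0 m (y + v)) := by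
        rw [Finset.mul_sum]
    _ = chi (theta0 m v) * ∑ y : Vm m, chi (theta0 m y) :=
        congrArg (chi (theta0 m v) * ·)
          (Equiv.sum_comp (Equiv.addRight v) (fun y => chi (theta0 m y)))
    _ = chi (theta0 m v) * 2 ^ m := by rw [sum_chi_theta0]

lemma phi_zero_right (y : Vm m) : phi m y 0 = 0 := by
  simp [phi]

lemma card_Vm : (Fintype.card (Vm m) : ℤ) = 2 ^ m * 2 ^ m := by
  rw [Fintype.card_fun]
  simp [pow_add]

lemma exists_good_y (hm : 3 ≤ m) (a p q z : Vm m)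
    (hθ : theta0 m (a + p) = theta0 m a)
    (hp : p ≠ 0) (hq : q ≠ 0) (hz : z ≠ 0) (hpq : p + q ≠ 0) (hpz : p + z ≠ 0)
    (hqz : q + z ≠ 0) :
    ∃ y : Vm m, phi m y p = 1 ∧ phi m y q = 1 ∧ phi m y z = 0 ∧ theta m a y = 0 := by
  by_contra hno
  push_neg at hno
  have hP0 : ∀ y : Vm m,
      (1 - chi (phi m y p)) * (1 - chi (phi m y q)) * (1 + chi (phi m y z)) *
        (1 + chi (theta m a y)) = 0 := by
    intro y
    rcases z2_cases (phi m y p) with h1 | h1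
    · simp [h1, chi_zero]
    rcases z2_cases (phi m y q) with h2 | h2
    · simp [h2, chi_zero]
    rcases z2_cases (phi m y z) with h3 | h3
    swap
    · simp [h3, chi]
    rcases z2_cases (theta m a y) with h4 | h4
    · exact absurd h4 (hno y h1 h2 h3)
    · simp [h4, chi]
  have hsum : ∑ y : Vm m,
      (1 - chi (phi m y p)) * (1 - chi (phi m y q)) * (1 + chi (phi m y z)) *
        (1 + chi (theta m a y)) = 0 := Finset.sum_eq_zero fun y _ => hP0 y
  have expand : ∀ y : Vm m,
      (1 - chi (phi m y p)) * (1 - chi (phi m y q)) * (1 + chi (phi m y z)) *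
        (1 + chi (theta m a y)) =
      1 - chi (phi m y p) - chi (phi m y q) + chi (phi m y (p + q))
        + chi (phi m y z) - chi (phi m y (p + z)) - chi (phi m y (q + z))
        + chi (phi m y (p + q + z))
        + chi (theta m a y) - chi (theta m (a + p) y) - chi (theta m (a + q) y)
        + chi (theta m (a + (p + q)) y)
        + chi (theta m (a + z) y) - chi (theta m (a + (p + z)) y)
        - chi (theta m (a + (q + z)) y) + chi (theta m (a + (p + q + z)) y) := by
    intro y
    simp only [theta_shift, phi_add_right, chi_add]
    ring
  rw [Finset.sum_congr rfl fun y _ => expand y] at hsum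
  simp only [Finset.sum_add_distrib, Finset.sum_sub_distrib, Finset.sum_const,
    Finset.card_univ, nsmul_eq_mul, mul_one] at hsum
  rw [sum_chi_linear hp, sum_chi_linear hq, sum_chi_linear hpq, sum_chi_linear hz,
    sum_chi_linear hpz, sum_chi_linear hqz, sum_chi_theta, sum_chi_theta, sum_chi_theta,
    sum_chi_theta, sum_chi_theta, sum_chi_theta, sum_chi_theta, sum_chi_theta, hθ,
    card_Vm] at hsum
  have h8 : 0 ≤ ∑ y : Vm m, chi (phi m y (p + q + z)) := by
    rcases eq_or_ne (p + q + z) 0 with h | h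
    · rw [h]
      simp [phi_zero_right, chi_zero]
    · rw [sum_chi_linear h]
  have hpow : (8 : ℤ) ≤ 2 ^ m := by
    calc (8 : ℤ) = 2 ^ 3 := by norm_num
    _ ≤ 2 ^ m := pow_le_pow_right₀ (by norm_num) hm
  have hpos : (0 : ℤ) < 2 ^ m := by positivity
  have hb1 := chi_bounds (theta0 m (a + q))
  have hb2 := chi_bounds (theta0 m (a + (p + q)))
  have hb3 := chi_bounds (theta0 m (a + z))
  have hb4 := chi_bounds (theta0 m (a + (p + z)))
  have hb5 := chi_bounds (theta0 m (a + (q + z)))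
  have hb6 := chi_bounds (theta0 m (a + (p + q + z)))
  nlinarith [hb1.1, hb2.1, hb3.1, hb4.1, hb5.1, hb6.1, hb1.2, hb2.2, hb3.2, hb4.2,
    hb5.2, hb6.2, mul_pos hpos hpos]

lemma v2_cancel (u v : Vm m) : u + (u + v) = v := by
  rw [← add_assoc, v2_add_self, zero_add]

lemma v2_ne_zero_of_ne {u v : Vm m} (h : u ≠ v) : u + v ≠ 0 := by
  intro h0
  apply h
  have h1 := v2_cancel u v
  rw [h0, add_zero] at h1
  exact h1

lemma theta_sum3 (x y' z' v : Vm m) :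
    theta m (x + y' + z') v = theta m x v + theta m y' v + theta m z' v := by
  simp only [theta, phi_add_right]
  linear_combination -(z2_add_self (theta0 m v))

lemma theta_add_arg (w u v : Vm m) :
    theta m w (u + v) = theta m w u + theta m w v + phi m u v := by
  simp only [theta, theta0_add, phi_add_left]
  ring

end Stmt2Aux

open Stmt2Aux

theorem stmt_2 (m : ℕ) (hm : 3 ≤ m) (ε : ZMod 2) (a b c d : Vm m)
    (ha : theta0 m a = ε) (hb : theta0 m b = ε)
    (hc : theta0 m c = ε) (hd : theta0 m d = ε)
    (hac : a ≠ c) (had : a ≠ d) (hcd : c ≠ d) (hbc : b ≠ c) (hbd : b ≠ d) :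
    (∃ A : Matrix (Fin m ⊕ Fin m) (Fin m ⊕ Fin m) (ZMod 2),
        A * fMat m * Aᵀ = fMat m ∧
        (∀ u : Vm m, theta m c (Matrix.vecMul u A) = theta m c u) ∧
        (∀ u : Vm m, theta m d (Matrix.vecMul u A) = theta m d u) ∧
        (∀ u : Vm m, theta m a (Matrix.vecMul u A) = theta m b u)) ↔
      theta0 m (a + c + d) = theta0 m (b + c + d) := by
  constructor
  · rintro ⟨A, hA1, hA2, hA3, hA4⟩
    have hABl : A * (fMat m * Aᵀ * fMat m) = 1 := by
      calc A * (fMat m * Aᵀ * fMat m) = (A * fMat m * Aᵀ) * fMat m := by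
            simp only [Matrix.mul_assoc]
        _ = fMat m * fMat m := by rw [hA1]
        _ = 1 := fMat_mul_fMat
    have hABr : (fMat m * Aᵀ * fMat m) * A = 1 := mul_eq_one_comm.mp hABl
    let eA : Vm m ≃ Vm m :=
      { toFun := fun u => Matrix.vecMul u A
        invFun := fun u => Matrix.vecMul u (fMat m * Aᵀ * fMat m)
        left_inv := fun u => by
          show (u ᵥ* A) ᵥ* (fMat m * Aᵀ * fMat m) = u
          rw [Matrix.vecMul_vecMul, hABl, Matrix.vecMul_one]
        right_inv := fun u => by
          show (u ᵥ* (fMat m * Aᵀ * fMat m)) ᵥ* A = u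
          rw [Matrix.vecMul_vecMul, hABr, Matrix.vecMul_one] }
    have hpt : ∀ u : Vm m,
        theta m (a + c + d) (Matrix.vecMul u A) = theta m (b + c + d) u := by
      intro u
      rw [theta_sum3, hA2 u, hA3 u, hA4 u, ← theta_sum3]
    have key : chi (theta0 m (a + c + d)) * 2 ^ m = chi (theta0 m (b + c + d)) * 2 ^ m := by
      calc chi (theta0 m (a + c + d)) * 2 ^ m
          = ∑ y : Vm m, chi (theta m (a + c + d) y) := (sum_chi_theta _).symm
        _ = ∑ y : Vm m, chi (theta m (a + c + d) (Matrix.vecMul y A)) :=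
            (Equiv.sum_comp eA (fun y => chi (theta m (a + c + d) y))).symm
        _ = ∑ y : Vm m, chi (theta m (b + c + d) y) :=
            Finset.sum_congr rfl fun y _ => by rw [hpt y]
        _ = chi (theta0 m (b + c + d)) * 2 ^ m := sum_chi_theta _
    exact chi_inj (mul_right_cancel₀ (pow_ne_zero m (two_ne_zero)) key)
  · intro hii
    rcases eq_or_ne a b with hab | hab
    · refine ⟨1, by simp, fun u => by rw [Matrix.vecMul_one], fun u => by rw [Matrix.vecMul_one],
        fun u => by rw [Matrix.vecMul_one, hab]⟩
    -- abbreviations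
    have hphis : phi m a c + phi m a d = phi m b c + phi m b d := by
      simp only [theta0_add, phi_add_left] at hii
      rw [ha, hb] at hii
      linear_combination hii
    have hzczd : theta m c (a + b) = theta m d (a + b) := by
      rw [theta, theta, phi_add_left, phi_add_left]
      linear_combination hphis + z2_add_self (phi m b c) - z2_add_self (phi m a d)
    have hθaz : theta m a (a + b) = 0 := by
      rw [theta, theta0_add, phi_add_left, phi_self, phi_comm b a, ha, hb]
      linear_combination z2_add_self ε + z2_add_self (phi m a b)
    have hone : (1 : ZMod 2) + 1 = 0 := by decide
    have habz : a + (a + b) = b := v2_cancel a b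
    rcases z2_cases (theta m c (a + b)) with hδ | hδ
    · -- two transvections
      have hδd : theta m d (a + b) = 0 := by rw [← hzczd, hδ]
      obtain ⟨y, hy1, hy2, hy3, hy4⟩ :=
        exists_good_y hm a (a + c) (a + d) (a + b)
          (by rw [v2_cancel a c, ha, hc])
          (v2_ne_zero_of_ne hac) (v2_ne_zero_of_ne had) (v2_ne_zero_of_ne hab)
          (by rw [add_add_add_comm, v2_add_self, zero_add]; exact v2_ne_zero_of_ne hcd)
          (by rw [add_add_add_comm, v2_add_self, zero_add, add_comm]
              exact v2_ne_zero_of_ne hbc)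
          (by rw [add_add_add_comm, v2_add_self, zero_add, add_comm]
              exact v2_ne_zero_of_ne hbd)
      -- derived facts about y
      have hcy : theta m c y = 1 := by
        have h := theta_shift a (a + c) y
        rw [v2_cancel a c, hy4, hy1, zero_add] at h
        exact h
      have hdy : theta m d y = 1 := by
        have h := theta_shift a (a + d) y
        rw [v2_cancel a d, hy4, hy2, zero_add] at h
        exact h
      have hcyz : theta m c (y + (a + b)) = 1 := by
        rw [theta_add_arg, hcy, hδ, hy3, add_zero, add_zero]
      have hdyz : theta m d (y + (a + b)) = 1 := by
        rw [theta_add_arg, hdy, hδd, hy3, add_zero, add_zero]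
      have hay2 : theta m (a + y) (y + (a + b)) = 0 := by
        rw [theta_add_arg, theta_shift, theta_shift, hy4, phi_self, hθaz, phi_comm (a+b) y,
          hy3]
        simp
      refine ⟨tMat m (y + (a + b)) * tMat m y,
        symp_mul (tMat_symplectic _) (tMat_symplectic _), ?_, ?_, ?_⟩ <;> intro u <;>
        rw [← Matrix.vecMul_vecMul, vecMul_tMat, vecMul_tMat]
      · rw [theta_tvec, hcy, hone, mul_zero, add_zero, theta_tvec, hcyz, hone, mul_zero,
          add_zero]
      · rw [theta_tvec, hdy, hone, mul_zero, add_zero, theta_tvec, hdyz, hone, mul_zero,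
          add_zero]
      · rw [theta_tvec, hy4, zero_add, mul_one, ← theta_shift, theta_tvec, hay2, zero_add,
          mul_one, ← theta_shift]
        congr 1
        rw [add_assoc, v2_cancel y (a + b), habz]
    · -- single transvection
      have hδd : theta m d (a + b) = 1 := by rw [← hzczd, hδ]
      refine ⟨tMat m (a + b), tMat_symplectic _, ?_, ?_, ?_⟩ <;> intro u <;> rw [vecMul_tMat]
      · rw [theta_tvec, hδ, hone, mul_zero, add_zero]
      · rw [theta_tvec, hδd, hone, mul_zero, add_zero]
      · rw [theta_tvec, hθaz, zero_add, mul_one, ← theta_shift, habz]
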